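/- Let Ω ⊆ ℝ^N be a measurable set of finite Lebesgue measure |Ω|, let r > 0, let f : ℝ^N → ℝ be measurable with |f(z)| ≤ M_f for all z, and let b : ℝ → ℝ satisfy |b(w)| ≤ C_b and |b(w₁) − b(w₂)| ≤ L_b|w₁ − w₂| for all w, w₁, w₂ ∈ ℝ. For u ∈ L²((−r,0) × Ω) and ξ ∈ L^∞(−r,0), define F[u,ξ](x) = ∫_{−r}^0 ( ∫_Ω b(u(θ,y)) f(x−y) dy ) ξ(θ) dθ for x ∈ Ω. Then for all u¹, u² ∈ L²((−r,0) × Ω) and all ξ¹ ∈ L^∞(−r,0), ξ² ∈ L¹(−r,0): ‖F[u¹,ξ¹] − F[u²,ξ²]‖_{L²(Ω)} ≤ M_f L_b ‖ξ¹‖_{L^∞(−r,0)} r^{1/2} |Ω| ‖u¹ − u²‖_{L²((−r,0)×Ω)} + M_f C_b |Ω|^{3/2} ‖ξ¹ − ξ²‖_{L¹(−r,0)}. -/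

import Mathlib

open MeasureTheory Set
open scoped ENNReal NNReal

/-- Core Lipschitz estimate from the proof of Theorem 2: with
`F[u,ξ](x) = ∫_{-r}^0 (∫_Ω b(u(θ,y)) f(x-y) dy) ξ(θ) dθ`, one has
`‖F[u¹,ξ¹] − F[u²,ξ²]‖_{L²(Ω)} ≤ M_f L_b ‖ξ¹‖_∞ r^{1/2} |Ω| ‖u¹−u²‖_{L²((-r,0)×Ω)}
 + M_f C_b |Ω|^{3/2} ‖ξ¹−ξ²‖_{L¹(-r,0)}`. -/
theorem distributed_delay_term_lipschitz
    {N : ℕ} (Ω : Set (EuclideanSpace ℝ (Fin N)))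
    (hΩmeas : MeasurableSet Ω) (hΩfin : volume Ω < ⊤)
    (r : ℝ) (hr : 0 < r)
    (f : EuclideanSpace ℝ (Fin N) → ℝ) (hf : Measurable f)
    (Mf : ℝ) (hMf : ∀ z, |f z| ≤ Mf)
    (b : ℝ → ℝ)
    (Cb : ℝ) (hCb : ∀ w, |b w| ≤ Cb)
    (Lb : ℝ) (hLb : ∀ w₁ w₂, |b w₁ - b w₂| ≤ Lb * |w₁ - w₂|)
    (F : (ℝ → EuclideanSpace ℝ (Fin N) → ℝ) → (ℝ → ℝ) →
          EuclideanSpace ℝ (Fin N) → ℝ)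
    (hFdef : ∀ u ξ x, F u ξ x = ∫ θ in Ioo (-r) 0,
        (∫ y in Ω, b (u θ y) * f (x - y)) * ξ θ)
    (u₁ u₂ : ℝ → EuclideanSpace ℝ (Fin N) → ℝ)
    (hu₁ : MemLp (fun p : ℝ × EuclideanSpace ℝ (Fin N) => u₁ p.1 p.2) 2
        ((volume.restrict (Ioo (-r) 0)).prod (volume.restrict Ω)))
    (hu₂ : MemLp (fun p : ℝ × EuclideanSpace ℝ (Fin N) => u₂ p.1 p.2) 2
        ((volume.restrict (Ioo (-r) 0)).prod (volume.restrict Ω)))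
    (ξ₁ ξ₂ : ℝ → ℝ)
    (hξ₁ : MemLp ξ₁ ⊤ (volume.restrict (Ioo (-r) 0)))
    (hξ₂ : IntegrableOn ξ₂ (Ioo (-r) 0)) :
    eLpNorm (fun x => F u₁ ξ₁ x - F u₂ ξ₂ x) 2 (volume.restrict Ω) ≤
      ENNReal.ofReal
        (Mf * Lb * (eLpNorm ξ₁ ⊤ (volume.restrict (Ioo (-r) 0))).toReal *
            Real.sqrt r * (volume Ω).toReal *
            (eLpNorm (fun p : ℝ × EuclideanSpace ℝ (Fin N) => u₁ p.1 p.2 - u₂ p.1 p.2) 2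
              ((volume.restrict (Ioo (-r) 0)).prod (volume.restrict Ω))).toReal
          + Mf * Cb * (volume Ω).toReal ^ ((3 : ℝ) / 2) *
            ∫ θ in Ioo (-r) 0, |ξ₁ θ - ξ₂ θ|) := by
  -- basic positivity facts
  have hMf0 : 0 ≤ Mf := (abs_nonneg _).trans (hMf 0)
  have hCb0 : 0 ≤ Cb := (abs_nonneg _).trans (hCb 0)
  have hLb0 : 0 ≤ Lb := by
    have h := hLb 1 0
    rw [show (1 : ℝ) - 0 = 1 by ring, abs_one, mul_one] at h
    exact (abs_nonneg _).trans h
  have hbcont : Continuous b := by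
    have : LipschitzWith Lb.toNNReal b := by
      refine LipschitzWith.of_dist_le_mul fun w₁ w₂ => ?_
      rw [Real.dist_eq, Real.dist_eq]
      calc |b w₁ - b w₂| ≤ Lb * |w₁ - w₂| := hLb w₁ w₂
        _ ≤ Lb.toNNReal * |w₁ - w₂| := by
            gcongr
            exact (Real.coe_toNNReal Lb hLb0).symm.le
    exact this.continuous
  -- measures
  haveI : Fact (volume (Ioo (-r) 0) < ⊤) := ⟨measure_Ioo_lt_top⟩
  haveI : Fact (volume Ω < ⊤) := ⟨hΩfin⟩
  set μ := volume.restrict (Ioo (-r) 0) with hμdef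
  set ν := volume.restrict Ω with hνdef
  set π := μ.prod ν with hπdef
  haveI : IsFiniteMeasure μ := Restrict.isFiniteMeasure _
  haveI : IsFiniteMeasure ν := Restrict.isFiniteMeasure _
  set a := (volume Ω).toReal with hadef
  have ha0 : 0 ≤ a := ENNReal.toReal_nonneg
  -- the difference function
  set w := fun p : ℝ × EuclideanSpace ℝ (Fin N) => u₁ p.1 p.2 - u₂ p.1 p.2 with hwdef
  have hw : MemLp w 2 π := hu₁.sub hu₂
  have hwmeas : AEStronglyMeasurable w π := hw.aestronglyMeasurable
  have hwint : Integrable w π := hw.integrable one_le_two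
  have ξ₁int : Integrable ξ₁ μ := hξ₁.integrable le_top
  have ξ₂int : Integrable ξ₂ μ := hξ₂
  set Kξ := (eLpNorm ξ₁ ⊤ μ).toReal with hKξdef
  have hKξ0 : 0 ≤ Kξ := ENNReal.toReal_nonneg
  have hKξae : ∀ᵐ θ ∂μ, |ξ₁ θ| ≤ Kξ := by
    filter_upwards [ae_le_eLpNormEssSup (f := ξ₁) (μ := μ)] with θ hθ
    have h2 : (‖ξ₁ θ‖₊ : ℝ≥0∞) ≤ eLpNorm ξ₁ ⊤ μ := by
      rw [eLpNorm_exponent_top]; exact_mod_cast hθ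
    have h3 := ENNReal.toReal_mono hξ₁.2.ne h2
    simpa [Real.norm_eq_abs, hKξdef] using h3
  set I := ∫ p, ‖w p‖ ∂π with hIdef
  have hI0 : 0 ≤ I := integral_nonneg fun p => norm_nonneg _
  set J := ∫ θ, |ξ₁ θ - ξ₂ θ| ∂μ with hJdef
  have hJ0 : 0 ≤ J := integral_nonneg fun θ => abs_nonneg _
  set n2 := (eLpNorm w 2 π).toReal with hn2def
  have hn20 : 0 ≤ n2 := ENNReal.toReal_nonneg
  -- Cauchy–Schwarz step : I ≤ √r √a n2
  have hCS : I ≤ Real.sqrt r * Real.sqrt a * n2 := by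
    have h1 : eLpNorm w 1 π ≤ eLpNorm w 2 π * (π univ) ^ ((1 : ℝ) / 2) := by
      have h := eLpNorm_le_eLpNorm_mul_rpow_measure_univ (p := 1) (q := 2)
        one_le_two hwmeas
      norm_num at h
      exact h
    have hπuniv : π univ = ENNReal.ofReal r * volume Ω := by
      rw [hπdef, ← univ_prod_univ, Measure.prod_prod, hμdef, hνdef,
        Measure.restrict_apply_univ, Measure.restrict_apply_univ, Real.volume_Ioo]
      norm_num
    have hfin : eLpNorm w 2 π * (π univ) ^ ((1 : ℝ) / 2) ≠ ⊤ := by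
      apply ENNReal.mul_ne_top hw.2.ne
      rw [hπuniv]
      exact (ENNReal.rpow_lt_top_of_nonneg (by norm_num)
        (ENNReal.mul_ne_top ENNReal.ofReal_ne_top hΩfin.ne)).ne
    have hI_eq : I = (eLpNorm w 1 π).toReal := by
      rw [eLpNorm_one_eq_lintegral_enorm, hIdef,
        integral_norm_eq_lintegral_enorm hwmeas]
    have h2 := ENNReal.toReal_mono hfin h1
    rw [← hI_eq] at h2
    refine h2.trans ?_
    rw [ENNReal.toReal_mul, ← ENNReal.toReal_rpow, hπuniv, ENNReal.toReal_mul,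
      ENNReal.toReal_ofReal hr.le]
    rw [← Real.sqrt_eq_rpow, Real.sqrt_mul hr.le]
    rw [hn2def, hadef]; apply le_of_eq; ring
  -- bounds for the inner integrals
  set Kg := Cb * (Mf * a) with hKgdef
  have hKg0 : 0 ≤ Kg := by positivity
  -- pointwise (in x) bound
  set C := Mf * Lb * Kξ * I + Kg * J with hCdef
  have key : ∀ x, ‖F u₁ ξ₁ x - F u₂ ξ₂ x‖ ≤ C := by
    intro x
    set φ₁ := fun p : ℝ × EuclideanSpace ℝ (Fin N) => b (u₁ p.1 p.2) * f (x - p.2)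
      with hφ₁def
    set φ₂ := fun p : ℝ × EuclideanSpace ℝ (Fin N) => b (u₂ p.1 p.2) * f (x - p.2)
      with hφ₂def
    have hfx : Measurable fun p : ℝ × EuclideanSpace ℝ (Fin N) => f (x - p.2) :=
      hf.comp (measurable_const.sub measurable_snd)
    have hφ₁m : AEStronglyMeasurable φ₁ π :=
      (hbcont.comp_aestronglyMeasurable hu₁.aestronglyMeasurable).mul
        hfx.aestronglyMeasurable
    have hφ₂m : AEStronglyMeasurable φ₂ π :=
      (hbcont.comp_aestronglyMeasurable hu₂.aestronglyMeasurable).mul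
        hfx.aestronglyMeasurable
    have hφb : ∀ (v : ℝ → EuclideanSpace ℝ (Fin N) → ℝ)
        (p : ℝ × EuclideanSpace ℝ (Fin N)), ‖b (v p.1 p.2) * f (x - p.2)‖ ≤ Cb * Mf := by
      intro v p
      rw [Real.norm_eq_abs, abs_mul]
      exact mul_le_mul (hCb _) (hMf _) (abs_nonneg _) hCb0
    have hφ₁int : Integrable φ₁ π :=
      (integrable_const (Cb * Mf)).mono' hφ₁m (ae_of_all _ (hφb u₁))
    have hφ₂int : Integrable φ₂ π :=
      (integrable_const (Cb * Mf)).mono' hφ₂m (ae_of_all _ (hφb u₂))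
    set g₁ := fun θ : ℝ => ∫ y, φ₁ (θ, y) ∂ν with hg₁def
    set g₂ := fun θ : ℝ => ∫ y, φ₂ (θ, y) ∂ν with hg₂def
    have hg₁m : AEStronglyMeasurable g₁ μ := hφ₁m.integral_prod_right'
    have hg₂m : AEStronglyMeasurable g₂ μ := hφ₂m.integral_prod_right'
    have hgb : ∀ (v : ℝ → EuclideanSpace ℝ (Fin N) → ℝ) (θ : ℝ),
        ‖∫ y, b (v θ y) * f (x - y) ∂ν‖ ≤ Kg := by
      intro v θ
      have h := norm_integral_le_of_norm_le (μ := ν)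
        (f := fun y => b (v θ y) * f (x - y)) (integrable_const (Cb * Mf))
        (ae_of_all _ fun y => hφb v (θ, y))
      refine h.trans ?_
      rw [integral_const, hνdef, measureReal_restrict_apply_univ, smul_eq_mul, hKgdef]
      change a * (Cb * Mf) ≤ Cb * (Mf * a)
      ring_nf
      exact le_rfl
    -- integrability of products over μ
    have hprod : ∀ g : ℝ → ℝ, AEStronglyMeasurable g μ → (∀ θ, ‖g θ‖ ≤ Kg) →
        ∀ ξ : ℝ → ℝ, Integrable ξ μ → Integrable (fun θ => g θ * ξ θ) μ := by
      intro g hgm hgb' ξ hξi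
      refine (hξi.norm.const_mul Kg).mono' (hgm.mul hξi.1) (ae_of_all _ fun θ => ?_)
      rw [norm_mul]
      exact mul_le_mul (hgb' θ) le_rfl (norm_nonneg _) hKg0
    have hg₁ξ₁ : Integrable (fun θ => g₁ θ * ξ₁ θ) μ := hprod g₁ hg₁m (hgb u₁) ξ₁ ξ₁int
    have hg₂ξ₁ : Integrable (fun θ => g₂ θ * ξ₁ θ) μ := hprod g₂ hg₂m (hgb u₂) ξ₁ ξ₁int
    have hg₂ξ₂ : Integrable (fun θ => g₂ θ * ξ₂ θ) μ := hprod g₂ hg₂m (hgb u₂) ξ₂ ξ₂int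
    -- slice facts
    set V := fun θ : ℝ => ∫ y, ‖w (θ, y)‖ ∂ν with hVdef
    have hV0 : ∀ θ, 0 ≤ V θ := fun θ => integral_nonneg fun y => norm_nonneg _
    have hVint : Integrable V μ := hwint.integral_norm_prod_left
    have hVI : ∫ θ, V θ ∂μ = I := by
      rw [hIdef, hπdef]
      exact integral_integral hwint.norm
    have hdiff : ∀ᵐ θ ∂μ, ‖g₁ θ - g₂ θ‖ ≤ Mf * Lb * V θ := by
      filter_upwards [hφ₁int.prod_right_ae, hφ₂int.prod_right_ae,
        hwint.norm.prod_right_ae] with θ h1 h2 h3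
      rw [hg₁def, hg₂def, ← integral_sub h1 h2]
      have hb2 := norm_integral_le_of_norm_le (μ := ν)
        (f := fun y => φ₁ (θ, y) - φ₂ (θ, y)) (h3.const_mul (Mf * Lb))
        (ae_of_all _ fun y => ?_)
      · refine hb2.trans ?_
        rw [integral_const_mul]
      · show ‖φ₁ (θ, y) - φ₂ (θ, y)‖ ≤ Mf * Lb * ‖w (θ, y)‖
        have he : φ₁ (θ, y) - φ₂ (θ, y) = (b (u₁ θ y) - b (u₂ θ y)) * f (x - y) := by
          show b (u₁ θ y) * f (x - y) - b (u₂ θ y) * f (x - y) = _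
          ring
        rw [he, Real.norm_eq_abs, abs_mul]
        have h5 : |b (u₁ θ y) - b (u₂ θ y)| * |f (x - y)| ≤ (Lb * |u₁ θ y - u₂ θ y|) * Mf :=
          mul_le_mul (hLb _ _) (hMf _) (abs_nonneg _) (by positivity)
        refine h5.trans ?_
        have : ‖w (θ, y)‖ = |u₁ θ y - u₂ θ y| := by rw [hwdef, Real.norm_eq_abs]
        rw [this]
        ring_nf
        exact le_rfl
    -- split the difference
    rw [hFdef, hFdef]
    have e1 : ∫ θ, (g₁ θ - g₂ θ) * ξ₁ θ ∂μ
        = (∫ θ, g₁ θ * ξ₁ θ ∂μ) - ∫ θ, g₂ θ * ξ₁ θ ∂μ := by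
      simp_rw [sub_mul]
      exact integral_sub hg₁ξ₁ hg₂ξ₁
    have e2 : ∫ θ, g₂ θ * (ξ₁ θ - ξ₂ θ) ∂μ
        = (∫ θ, g₂ θ * ξ₁ θ ∂μ) - ∫ θ, g₂ θ * ξ₂ θ ∂μ := by
      simp_rw [mul_sub]
      exact integral_sub hg₂ξ₁ hg₂ξ₂
    have hsplit : (∫ θ, g₁ θ * ξ₁ θ ∂μ) - (∫ θ, g₂ θ * ξ₂ θ ∂μ)
        = (∫ θ, (g₁ θ - g₂ θ) * ξ₁ θ ∂μ) + ∫ θ, g₂ θ * (ξ₁ θ - ξ₂ θ) ∂μ := by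
      rw [e1, e2]; ring
    rw [hsplit]
    have hb1 : ‖∫ θ, (g₁ θ - g₂ θ) * ξ₁ θ ∂μ‖ ≤ Mf * Lb * Kξ * I := by
      have h := norm_integral_le_of_norm_le (μ := μ)
        (f := fun θ => (g₁ θ - g₂ θ) * ξ₁ θ)
        (hVint.const_mul (Mf * Lb * Kξ)) ?_
      · refine h.trans ?_
        rw [integral_const_mul, hVI]
      · filter_upwards [hdiff, hKξae] with θ h1 h2
        rw [norm_mul]
        calc ‖g₁ θ - g₂ θ‖ * ‖ξ₁ θ‖ ≤ (Mf * Lb * V θ) * Kξ := by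
              exact mul_le_mul h1 (by simpa [Real.norm_eq_abs] using h2)
                (norm_nonneg _) (by positivity)
          _ = Mf * Lb * Kξ * V θ := by ring
    have hb2 : ‖∫ θ, g₂ θ * (ξ₁ θ - ξ₂ θ) ∂μ‖ ≤ Kg * J := by
      have h := norm_integral_le_of_norm_le (μ := μ)
        (f := fun θ => g₂ θ * (ξ₁ θ - ξ₂ θ))
        (((ξ₁int.sub ξ₂int).norm.const_mul Kg)) (ae_of_all _ fun θ => ?_)
      · refine h.trans ?_
        rw [integral_const_mul, hJdef]
        simp [Real.norm_eq_abs]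
      · rw [norm_mul]
        exact mul_le_mul (hgb u₂ θ) le_rfl (norm_nonneg _) hKg0
    calc ‖(∫ θ, (g₁ θ - g₂ θ) * ξ₁ θ ∂μ) + ∫ θ, g₂ θ * (ξ₁ θ - ξ₂ θ) ∂μ‖
        ≤ ‖∫ θ, (g₁ θ - g₂ θ) * ξ₁ θ ∂μ‖ + ‖∫ θ, g₂ θ * (ξ₁ θ - ξ₂ θ) ∂μ‖ :=
          norm_add_le _ _
      _ ≤ Mf * Lb * Kξ * I + Kg * J := add_le_add hb1 hb2
  -- assemble
  have hmain := eLpNorm_le_of_ae_bound (μ := ν) (p := 2)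
    (f := fun x => F u₁ ξ₁ x - F u₂ ξ₂ x) (ae_of_all _ key)
  refine hmain.trans ?_
  have hνuniv : ν univ = ENNReal.ofReal a := by
    rw [hνdef, Measure.restrict_apply_univ, hadef, ENNReal.ofReal_toReal hΩfin.ne]
  rw [hνuniv]
  have hexp : ((2 : ℝ≥0∞).toReal)⁻¹ = ((2 : ℝ))⁻¹ := by norm_num
  rw [hexp, ENNReal.ofReal_rpow_of_nonneg ha0 (by norm_num), ← ENNReal.ofReal_mul (by positivity)]
  apply ENNReal.ofReal_le_ofReal
  have hsq : a ^ ((2 : ℝ))⁻¹ = Real.sqrt a := by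
    rw [Real.sqrt_eq_rpow]; norm_num
  rw [hsq]
  have h32 : a ^ ((3 : ℝ) / 2) = a * Real.sqrt a := by
    rcases eq_or_lt_of_le ha0 with h | h
    · rw [← h]
      rw [Real.zero_rpow (by norm_num), Real.sqrt_zero, mul_zero]
    · rw [show (3 : ℝ) / 2 = 1 + 1 / 2 by norm_num, Real.rpow_add h, Real.rpow_one,
        Real.sqrt_eq_rpow]
  rw [h32]
  have hss : Real.sqrt a * Real.sqrt a = a := Real.mul_self_sqrt ha0
  have hC1 : Real.sqrt a * (Mf * Lb * Kξ * I) ≤ Mf * Lb * Kξ * Real.sqrt r * a * n2 := by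
    have h := mul_le_mul_of_nonneg_left hCS (by positivity : (0 : ℝ) ≤ Real.sqrt a * (Mf * Lb * Kξ))
    calc Real.sqrt a * (Mf * Lb * Kξ * I)
        = Real.sqrt a * (Mf * Lb * Kξ) * I := by ring
      _ ≤ Real.sqrt a * (Mf * Lb * Kξ) * (Real.sqrt r * Real.sqrt a * n2) := h
      _ = Mf * Lb * Kξ * Real.sqrt r * (Real.sqrt a * Real.sqrt a) * n2 := by ring
      _ = Mf * Lb * Kξ * Real.sqrt r * a * n2 := by rw [hss]
  calc Real.sqrt a * C
      = Real.sqrt a * (Mf * Lb * Kξ * I) + Real.sqrt a * (Kg * J) := by rw [hCdef]; ring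
    _ ≤ Mf * Lb * Kξ * Real.sqrt r * a * n2 + Real.sqrt a * (Kg * J) :=
        add_le_add_left hC1 _
    _ = Mf * Lb * Kξ * Real.sqrt r * a * n2 + Mf * Cb * (a * Real.sqrt a) * J := by
        rw [hKgdef]; ring
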